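/- Let Λ₁, Λ₂ be compatible channels with joint channel Λ : S(H) → S(H₁ ⊗ H₂), let J₁ = {Φ'¹_x : L(H₁) → L(K₁)} and J₂ = {Φ'²_y : L(H₂) → L(K₂)} be arbitrary instruments with total channels Γ₁ = Σ_x Φ'¹_x and Γ₂ = Σ_y Φ'²_y. Then the instruments I₁ = {Φ'¹_x ∘ Λ₁} and I₂ = {Φ'²_y ∘ Λ₂} are parallelly compatible, with joint instrument I = {(Φ'¹_x ⊗ Φ'²_y) ∘ Λ}. -/

import Mathlib

/-! Linear maps on `Matrix (A × B) (A × B) ℂ` are determined by their values on Kronecker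
products, where `tensorMap Φ Ψ (X ⊗ₖ Y) = Φ X ⊗ₖ Ψ Y`. Hence tracing out the second factor of
`tensorMap Φ Ψ M` gives `Φ (ptraceRight M)` as soon as `Ψ` is trace preserving; applied to the
total channel `∑ y, J₂ y` this yields the first marginal, and symmetrically the second.
Complete positivity is inherited because composites and Kronecker products of Kraus maps are
again Kraus maps. -/

open Matrix BigOperators ComplexOrder

noncomputable section

/-- Partial trace over the second tensor factor. -/
def ptraceRight {A B : Type*} [Fintype B] (M : Matrix (A × B) (A × B) ℂ) :
    Matrix A A ℂ := fun i j => ∑ k, M (i, k) (j, k)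

/-- Partial trace over the first tensor factor. -/
def ptraceLeft {A B : Type*} [Fintype A] (M : Matrix (A × B) (A × B) ℂ) :
    Matrix B B ℂ := fun i j => ∑ k, M (k, i) (k, j)

/-- Complete positivity, via existence of a Kraus decomposition (Choi's theorem). -/
def IsCP {H K : Type*} [Fintype H] [Fintype K]
    (Φ : Matrix H H ℂ →ₗ[ℂ] Matrix K K ℂ) : Prop :=
  ∃ (m : ℕ) (Ks : Fin m → Matrix K H ℂ), ∀ ρ, Φ ρ = ∑ i, Ks i * ρ * (Ks i)ᴴ

def IsTP {H K : Type*} [Fintype H] [Fintype K]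
    (Φ : Matrix H H ℂ →ₗ[ℂ] Matrix K K ℂ) : Prop :=
  ∀ ρ, (Φ ρ).trace = ρ.trace

/-- A quantum channel is a CPTP map. -/
def IsChannel {H K : Type*} [Fintype H] [Fintype K]
    (Φ : Matrix H H ℂ →ₗ[ℂ] Matrix K K ℂ) : Prop := IsCP Φ ∧ IsTP Φ

/-- A quantum instrument: a finite family of CP maps summing to a CPTP map. -/
def IsInstrument {ι H K : Type*} [Fintype ι] [Fintype H] [Fintype K]
    (Φ : ι → (Matrix H H ℂ →ₗ[ℂ] Matrix K K ℂ)) : Prop :=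
  (∀ x, IsCP (Φ x)) ∧ IsTP (∑ x, Φ x)

def IsDensity {H : Type*} [Fintype H] (ρ : Matrix H H ℂ) : Prop :=
  ρ.PosSemidef ∧ ρ.trace = 1

def IsPOVM {ι H : Type*} [Fintype ι] [Fintype H] [DecidableEq H]
    (A : ι → Matrix H H ℂ) : Prop :=
  (∀ x, (A x).PosSemidef) ∧ (∑ x, A x) = 1

/-- `Φd` is the Heisenberg dual of `Φ`. -/
def IsDual {H K : Type*} [Fintype H] [Fintype K]
    (Φ : Matrix H H ℂ →ₗ[ℂ] Matrix K K ℂ)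
    (Φd : Matrix K K ℂ →ₗ[ℂ] Matrix H H ℂ) : Prop :=
  ∀ ρ X, ((Φ ρ) * X).trace = (ρ * Φd X).trace

/-- The instrument `I` measures the observable `A`. -/
def ACompatible {ι H K : Type*} [Fintype ι] [Fintype H] [Fintype K]
    (A : ι → Matrix H H ℂ) (I : ι → (Matrix H H ℂ →ₗ[ℂ] Matrix K K ℂ)) : Prop :=
  ∀ ρ, IsDensity ρ → ∀ x, (I x ρ).trace = (ρ * A x).trace

/-- Observable-observable compatibility: existence of a joint POVM. -/
def ObsCompatible {ιx ιy H : Type*} [Fintype ιx] [Fintype ιy] [Fintype H] [DecidableEq H]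
    (A : ιx → Matrix H H ℂ) (B : ιy → Matrix H H ℂ) : Prop :=
  ∃ G : ιx × ιy → Matrix H H ℂ, IsPOVM G ∧
    (∀ x, ∑ y, G (x, y) = A x) ∧ (∀ y, ∑ x, G (x, y) = B y)

/-- Channel-channel compatibility: existence of a joint channel. -/
def ChannelsCompatible {H K₁ K₂ : Type*} [Fintype H] [Fintype K₁] [Fintype K₂]
    (Λ₁ : Matrix H H ℂ →ₗ[ℂ] Matrix K₁ K₁ ℂ)
    (Λ₂ : Matrix H H ℂ →ₗ[ℂ] Matrix K₂ K₂ ℂ) : Prop :=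
  ∃ Λ : Matrix H H ℂ →ₗ[ℂ] Matrix (K₁ × K₂) (K₁ × K₂) ℂ, IsChannel Λ ∧
    (∀ ρ, ptraceRight (Λ ρ) = Λ₁ ρ) ∧ (∀ ρ, ptraceLeft (Λ ρ) = Λ₂ ρ)

/-- Observable-channel compatibility. -/
def ObsChannelCompatible {ι H K : Type*} [Fintype ι] [Fintype H] [Fintype K]
    (A : ι → Matrix H H ℂ) (Λ : Matrix H H ℂ →ₗ[ℂ] Matrix K K ℂ) : Prop :=
  ∃ I : ι → (Matrix H H ℂ →ₗ[ℂ] Matrix K K ℂ),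
    IsInstrument I ∧ ACompatible A I ∧ (∑ x, I x) = Λ

/-- Traditional compatibility of two instruments with the same output space. -/
def TraditionallyCompatible {ιx ιy H K : Type*} [Fintype ιx] [Fintype ιy] [Fintype H] [Fintype K]
    (I₁ : ιx → (Matrix H H ℂ →ₗ[ℂ] Matrix K K ℂ))
    (I₂ : ιy → (Matrix H H ℂ →ₗ[ℂ] Matrix K K ℂ)) : Prop :=
  ∃ Φ : ιx × ιy → (Matrix H H ℂ →ₗ[ℂ] Matrix K K ℂ), IsInstrument Φ ∧
    (∀ x, ∑ y, Φ (x, y) = I₁ x) ∧ (∀ y, ∑ x, Φ (x, y) = I₂ y)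

/-- Parallel compatibility of two instruments. -/
def ParallelCompatible {ιx ιy H K₁ K₂ : Type*} [Fintype ιx] [Fintype ιy]
    [Fintype H] [Fintype K₁] [Fintype K₂]
    (I₁ : ιx → (Matrix H H ℂ →ₗ[ℂ] Matrix K₁ K₁ ℂ))
    (I₂ : ιy → (Matrix H H ℂ →ₗ[ℂ] Matrix K₂ K₂ ℂ)) : Prop :=
  ∃ Φ : ιx × ιy → (Matrix H H ℂ →ₗ[ℂ] Matrix (K₁ × K₂) (K₁ × K₂) ℂ), IsInstrument Φ ∧
    (∀ x ρ, ∑ y, ptraceRight (Φ (x, y) ρ) = I₁ x ρ) ∧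
    (∀ y ρ, ∑ x, ptraceLeft (Φ (x, y) ρ) = I₂ y ρ)

/-- Tensor product of two maps on matrix algebras. -/
def tensorMap {A B C D : Type*} [Fintype A] [Fintype B] [Fintype C] [Fintype D]
    [DecidableEq A] [DecidableEq B]
    (Φ : Matrix A A ℂ →ₗ[ℂ] Matrix C C ℂ) (Ψ : Matrix B B ℂ →ₗ[ℂ] Matrix D D ℂ) :
    Matrix (A × B) (A × B) ℂ →ₗ[ℂ] Matrix (C × D) (C × D) ℂ where
  toFun M := fun p q => ∑ a, ∑ a', ∑ b, ∑ b',
    M (a, b) (a', b') * (Φ (Matrix.single a a' 1)) p.1 q.1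
      * (Ψ (Matrix.single b b' 1)) p.2 q.2
  map_add' M N := by
    funext p q
    simp [Matrix.add_apply, add_mul, Finset.sum_add_distrib]
    rfl
  map_smul' c M := by
    funext p q
    simp [Matrix.smul_apply, Finset.mul_sum, mul_assoc]
    simp only [← Finset.mul_sum]
    rfl

open Kronecker

namespace Matrix

variable {R A B C D M : Type*}

theorem sum_kronecker [CommSemiring R] {ι : Type*} (s : Finset ι) (X : ι → Matrix A B R)
    (Y : Matrix C D R) : (∑ i ∈ s, X i) ⊗ₖ Y = ∑ i ∈ s, X i ⊗ₖ Y := by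
  ext ⟨a, c⟩ ⟨b, d⟩
  simp [Matrix.sum_apply, Finset.sum_mul]

theorem kronecker_sum [CommSemiring R] {ι : Type*} (s : Finset ι) (X : Matrix A B R)
    (Y : ι → Matrix C D R) : X ⊗ₖ (∑ i ∈ s, Y i) = ∑ i ∈ s, X ⊗ₖ Y i := by
  ext ⟨a, c⟩ ⟨b, d⟩
  simp [Matrix.sum_apply, Finset.mul_sum]

theorem linearMap_ext_kronecker [CommSemiring R] [AddCommMonoid M] [Module R M]
    [Finite A] [Finite B] [Finite C] [Finite D]
    [DecidableEq A] [DecidableEq B] [DecidableEq C] [DecidableEq D]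
    {f g : Matrix (A × C) (B × D) R →ₗ[R] M} (h : ∀ X Y, f (X ⊗ₖ Y) = g (X ⊗ₖ Y)) :
    f = g := by
  refine ext_linearMap R fun ⟨a, c⟩ ⟨b, d⟩ => LinearMap.ext fun r => ?_
  simpa [single_kronecker_single] using h (single a b r) (single c d 1)

end Matrix

theorem LinearMap.map_matrix_eq_sum_single {R A B M : Type*} [CommSemiring R] [Fintype A]
    [Fintype B] [DecidableEq A] [DecidableEq B] [AddCommMonoid M] [Module R M]
    (Φ : Matrix A B R →ₗ[R] M) (X : Matrix A B R) :
    Φ X = ∑ a, ∑ b, X a b • Φ (Matrix.single a b 1) := by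
  conv_lhs => rw [Matrix.matrix_eq_sum_single X]
  simp only [map_sum, ← map_smul, Matrix.smul_single, smul_eq_mul, mul_one]

section TensorMap

variable {A B C D : Type*} [Fintype A] [Fintype B] [Fintype C] [Fintype D]
  [DecidableEq A] [DecidableEq B]

theorem tensorMap_kronecker (Φ : Matrix A A ℂ →ₗ[ℂ] Matrix C C ℂ)
    (Ψ : Matrix B B ℂ →ₗ[ℂ] Matrix D D ℂ) (X : Matrix A A ℂ) (Y : Matrix B B ℂ) :
    tensorMap Φ Ψ (X ⊗ₖ Y) = Φ X ⊗ₖ Ψ Y := by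
  ext ⟨c, d⟩ ⟨c', d'⟩
  rw [Matrix.kronecker_apply, Φ.map_matrix_eq_sum_single, Ψ.map_matrix_eq_sum_single]
  simp only [Matrix.sum_apply, Matrix.smul_apply, smul_eq_mul, Finset.sum_mul_sum]
  refine Finset.sum_congr rfl fun a _ => ?_
  rw [Finset.sum_comm]
  refine Finset.sum_congr rfl fun b _ => Finset.sum_congr rfl fun a' _ =>
    Finset.sum_congr rfl fun b' _ => ?_
  show X a a' * Y b b' * _ * _ = _
  ring

theorem tensorMap_sum_left {ι : Type*} (s : Finset ι) (Φ : ι → Matrix A A ℂ →ₗ[ℂ] Matrix C C ℂ)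
    (Ψ : Matrix B B ℂ →ₗ[ℂ] Matrix D D ℂ) :
    tensorMap (∑ x ∈ s, Φ x) Ψ = ∑ x ∈ s, tensorMap (Φ x) Ψ :=
  Matrix.linearMap_ext_kronecker fun X Y => by
    simp only [LinearMap.sum_apply, tensorMap_kronecker, Matrix.sum_kronecker]

theorem tensorMap_sum_right {ι : Type*} (s : Finset ι) (Φ : Matrix A A ℂ →ₗ[ℂ] Matrix C C ℂ)
    (Ψ : ι → Matrix B B ℂ →ₗ[ℂ] Matrix D D ℂ) :
    tensorMap Φ (∑ y ∈ s, Ψ y) = ∑ y ∈ s, tensorMap Φ (Ψ y) :=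
  Matrix.linearMap_ext_kronecker fun X Y => by
    simp only [LinearMap.sum_apply, tensorMap_kronecker, Matrix.kronecker_sum]

end TensorMap

section PartialTrace

variable {A B : Type*}

@[simps]
def ptraceRightLinearMap [Fintype B] : Matrix (A × B) (A × B) ℂ →ₗ[ℂ] Matrix A A ℂ where
  toFun := ptraceRight
  map_add' M N := by ext; simp [ptraceRight, Finset.sum_add_distrib]
  map_smul' c M := by ext; simp [ptraceRight, Finset.mul_sum]

@[simps]
def ptraceLeftLinearMap [Fintype A] : Matrix (A × B) (A × B) ℂ →ₗ[ℂ] Matrix B B ℂ where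
  toFun := ptraceLeft
  map_add' M N := by ext; simp [ptraceLeft, Finset.sum_add_distrib]
  map_smul' c M := by ext; simp [ptraceLeft, Finset.mul_sum]

theorem ptraceRight_sum [Fintype B] {ι : Type*} (s : Finset ι)
    (M : ι → Matrix (A × B) (A × B) ℂ) :
    ptraceRight (∑ i ∈ s, M i) = ∑ i ∈ s, ptraceRight (M i) :=
  map_sum ptraceRightLinearMap M s

theorem ptraceLeft_sum [Fintype A] {ι : Type*} (s : Finset ι)
    (M : ι → Matrix (A × B) (A × B) ℂ) :
    ptraceLeft (∑ i ∈ s, M i) = ∑ i ∈ s, ptraceLeft (M i) :=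
  map_sum ptraceLeftLinearMap M s

theorem ptraceRight_kronecker [Fintype B] (X : Matrix A A ℂ) (Y : Matrix B B ℂ) :
    ptraceRight (X ⊗ₖ Y) = Y.trace • X := by
  ext i j
  simp [ptraceRight, Matrix.trace, ← Finset.mul_sum, mul_comm]

theorem ptraceLeft_kronecker [Fintype A] (X : Matrix A A ℂ) (Y : Matrix B B ℂ) :
    ptraceLeft (X ⊗ₖ Y) = X.trace • Y := by
  ext i j
  simp [ptraceLeft, Matrix.trace, ← Finset.sum_mul]

theorem trace_ptraceRight [Fintype A] [Fintype B] (M : Matrix (A × B) (A × B) ℂ) :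
    (ptraceRight M).trace = M.trace := by
  simp [ptraceRight, Matrix.trace, Fintype.sum_prod_type]

variable {C D : Type*} [Fintype A] [Fintype B] [Fintype C] [Fintype D]
  [DecidableEq A] [DecidableEq B]

theorem ptraceRight_tensorMap (Φ : Matrix A A ℂ →ₗ[ℂ] Matrix C C ℂ)
    {Ψ : Matrix B B ℂ →ₗ[ℂ] Matrix D D ℂ} (hΨ : IsTP Ψ) (M : Matrix (A × B) (A × B) ℂ) :
    ptraceRight (tensorMap Φ Ψ M) = Φ (ptraceRight M) := by
  have : ptraceRightLinearMap ∘ₗ tensorMap Φ Ψ = Φ ∘ₗ ptraceRightLinearMap :=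
    Matrix.linearMap_ext_kronecker fun X Y => by
      simp [tensorMap_kronecker, ptraceRight_kronecker, hΨ Y]
  exact LinearMap.congr_fun this M

theorem ptraceLeft_tensorMap {Φ : Matrix A A ℂ →ₗ[ℂ] Matrix C C ℂ} (hΦ : IsTP Φ)
    (Ψ : Matrix B B ℂ →ₗ[ℂ] Matrix D D ℂ) (M : Matrix (A × B) (A × B) ℂ) :
    ptraceLeft (tensorMap Φ Ψ M) = Ψ (ptraceLeft M) := by
  have : ptraceLeftLinearMap ∘ₗ tensorMap Φ Ψ = Ψ ∘ₗ ptraceLeftLinearMap :=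
    Matrix.linearMap_ext_kronecker fun X Y => by
      simp [tensorMap_kronecker, ptraceLeft_kronecker, hΦ X]
  exact LinearMap.congr_fun this M

end PartialTrace

section Kraus

variable {H K L : Type*} [Fintype H]

def krausMap {ι : Type*} [Fintype ι] (Ks : ι → Matrix K H ℂ) :
    Matrix H H ℂ →ₗ[ℂ] Matrix K K ℂ where
  toFun ρ := ∑ i, Ks i * ρ * (Ks i)ᴴ
  map_add' ρ σ := by simp [Matrix.mul_add, Matrix.add_mul, Finset.sum_add_distrib]
  map_smul' c ρ := by simp [Finset.smul_sum]

theorem krausMap_apply {ι : Type*} [Fintype ι] (Ks : ι → Matrix K H ℂ) (ρ : Matrix H H ℂ) :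
    krausMap Ks ρ = ∑ i, Ks i * ρ * (Ks i)ᴴ := rfl

theorem isCP_krausMap [Fintype K] {ι : Type*} [Fintype ι] (Ks : ι → Matrix K H ℂ) :
    IsCP (krausMap Ks) := by
  classical
  refine ⟨Fintype.card ι, Ks ∘ (Fintype.equivFin ι).symm, fun ρ => ?_⟩
  exact Fintype.sum_equiv (Fintype.equivFin ι) _ _ fun i => by simp

theorem IsCP.exists_eq_krausMap [Fintype K] {Φ : Matrix H H ℂ →ₗ[ℂ] Matrix K K ℂ}
    (hΦ : IsCP Φ) :
    ∃ (m : ℕ) (Ks : Fin m → Matrix K H ℂ), Φ = krausMap Ks := by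
  obtain ⟨m, Ks, hKs⟩ := hΦ
  exact ⟨m, Ks, LinearMap.ext hKs⟩

theorem krausMap_comp_krausMap [Fintype K] {ι κ : Type*} [Fintype ι] [Fintype κ]
    (Ks : ι → Matrix L K ℂ) (Ls : κ → Matrix K H ℂ) :
    krausMap Ks ∘ₗ krausMap Ls = krausMap fun p : ι × κ => Ks p.1 * Ls p.2 := by
  ext1 ρ
  simp only [LinearMap.comp_apply, krausMap_apply, Fintype.sum_prod_type, Matrix.mul_sum,
    Matrix.sum_mul, Matrix.conjTranspose_mul, Matrix.mul_assoc]

theorem IsCP.comp [Fintype K] [Fintype L] {Φ : Matrix K K ℂ →ₗ[ℂ] Matrix L L ℂ}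
    {Λ : Matrix H H ℂ →ₗ[ℂ] Matrix K K ℂ}
    (hΦ : IsCP Φ) (hΛ : IsCP Λ) : IsCP (Φ ∘ₗ Λ) := by
  obtain ⟨_, Ks, rfl⟩ := hΦ.exists_eq_krausMap
  obtain ⟨_, Ls, rfl⟩ := hΛ.exists_eq_krausMap
  rw [krausMap_comp_krausMap]
  exact isCP_krausMap _

theorem IsTP.comp [Fintype K] [Fintype L] {Φ : Matrix K K ℂ →ₗ[ℂ] Matrix L L ℂ}
    {Λ : Matrix H H ℂ →ₗ[ℂ] Matrix K K ℂ}
    (hΦ : IsTP Φ) (hΛ : IsTP Λ) : IsTP (Φ ∘ₗ Λ) :=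
  fun ρ => (hΦ (Λ ρ)).trans (hΛ ρ)

end Kraus

section TensorMapCPTP

variable {A B C D : Type*} [Fintype A] [Fintype B] [Fintype C] [Fintype D]
  [DecidableEq A] [DecidableEq B]

theorem tensorMap_krausMap {ι κ : Type*} [Fintype ι] [Fintype κ]
    (Ks : ι → Matrix C A ℂ) (Ls : κ → Matrix D B ℂ) :
    tensorMap (krausMap Ks) (krausMap Ls) = krausMap fun p : ι × κ => Ks p.1 ⊗ₖ Ls p.2 :=
  Matrix.linearMap_ext_kronecker fun X Y => by
    simp only [tensorMap_kronecker, krausMap_apply, Matrix.sum_kronecker, Matrix.kronecker_sum,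
      Fintype.sum_prod_type, Matrix.conjTranspose_kronecker, Matrix.mul_kronecker_mul]
    exact Finset.sum_comm

theorem IsCP.tensorMap {Φ : Matrix A A ℂ →ₗ[ℂ] Matrix C C ℂ} {Ψ : Matrix B B ℂ →ₗ[ℂ] Matrix D D ℂ}
    (hΦ : IsCP Φ) (hΨ : IsCP Ψ) : IsCP (tensorMap Φ Ψ) := by
  obtain ⟨_, Ks, rfl⟩ := hΦ.exists_eq_krausMap
  obtain ⟨_, Ls, rfl⟩ := hΨ.exists_eq_krausMap
  rw [tensorMap_krausMap]
  exact isCP_krausMap _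

theorem IsTP.tensorMap {Φ : Matrix A A ℂ →ₗ[ℂ] Matrix C C ℂ} {Ψ : Matrix B B ℂ →ₗ[ℂ] Matrix D D ℂ}
    (hΦ : IsTP Φ) (hΨ : IsTP Ψ) : IsTP (tensorMap Φ Ψ) := fun M => by
  rw [← trace_ptraceRight, ptraceRight_tensorMap Φ hΨ, hΦ, trace_ptraceRight]

end TensorMapCPTP

section Marginals

variable {A B C D ι : Type*} [Fintype A] [Fintype B] [Fintype C] [Fintype D]
  [DecidableEq A] [DecidableEq B] [Fintype ι]

theorem sum_ptraceRight_tensorMap (Φ : Matrix A A ℂ →ₗ[ℂ] Matrix C C ℂ)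
    {Ψ : ι → Matrix B B ℂ →ₗ[ℂ] Matrix D D ℂ} (hΨ : IsTP (∑ y, Ψ y))
    (M : Matrix (A × B) (A × B) ℂ) :
    ∑ y, ptraceRight (tensorMap Φ (Ψ y) M) = Φ (ptraceRight M) := by
  rw [← ptraceRight_sum, ← LinearMap.sum_apply, ← tensorMap_sum_right, ptraceRight_tensorMap Φ hΨ]

theorem sum_ptraceLeft_tensorMap {Φ : ι → Matrix A A ℂ →ₗ[ℂ] Matrix C C ℂ}
    (hΦ : IsTP (∑ x, Φ x)) (Ψ : Matrix B B ℂ →ₗ[ℂ] Matrix D D ℂ)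
    (M : Matrix (A × B) (A × B) ℂ) :
    ∑ x, ptraceLeft (tensorMap (Φ x) Ψ M) = Ψ (ptraceLeft M) := by
  rw [← ptraceLeft_sum, ← LinearMap.sum_apply, ← tensorMap_sum_left, ptraceLeft_tensorMap hΦ Ψ]

end Marginals

theorem stmt_6_general {H H₁ H₂ K₁ K₂ ιx ιy : Type*} [Fintype H]
    [Fintype H₁] [DecidableEq H₁] [Fintype H₂] [DecidableEq H₂]
    [Fintype K₁] [Fintype K₂]
    [Fintype ιx] [Fintype ιy]
    (Λ₁ : Matrix H H ℂ →ₗ[ℂ] Matrix H₁ H₁ ℂ)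
    (Λ₂ : Matrix H H ℂ →ₗ[ℂ] Matrix H₂ H₂ ℂ)
    (Λ : Matrix H H ℂ →ₗ[ℂ] Matrix (H₁ × H₂) (H₁ × H₂) ℂ) (hΛ : IsChannel Λ)
    (hm₁ : ∀ ρ, ptraceRight (Λ ρ) = Λ₁ ρ) (hm₂ : ∀ ρ, ptraceLeft (Λ ρ) = Λ₂ ρ)
    (J₁ : ιx → (Matrix H₁ H₁ ℂ →ₗ[ℂ] Matrix K₁ K₁ ℂ)) (hJ₁ : IsInstrument J₁)
    (J₂ : ιy → (Matrix H₂ H₂ ℂ →ₗ[ℂ] Matrix K₂ K₂ ℂ)) (hJ₂ : IsInstrument J₂) :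
    IsInstrument (fun p : ιx × ιy => tensorMap (J₁ p.1) (J₂ p.2) ∘ₗ Λ) ∧
    (∀ x ρ, ∑ y, ptraceRight ((tensorMap (J₁ x) (J₂ y) ∘ₗ Λ) ρ) = (J₁ x ∘ₗ Λ₁) ρ) ∧
    (∀ y ρ, ∑ x, ptraceLeft ((tensorMap (J₁ x) (J₂ y) ∘ₗ Λ) ρ) = (J₂ y ∘ₗ Λ₂) ρ) ∧
    ParallelCompatible (fun x => J₁ x ∘ₗ Λ₁) (fun y => J₂ y ∘ₗ Λ₂) := by
  have marginal₁ : ∀ x ρ, ∑ y, ptraceRight ((tensorMap (J₁ x) (J₂ y) ∘ₗ Λ) ρ)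
      = (J₁ x ∘ₗ Λ₁) ρ := fun x ρ => by
    simp only [LinearMap.comp_apply, sum_ptraceRight_tensorMap _ hJ₂.2, hm₁]
  have marginal₂ : ∀ y ρ, ∑ x, ptraceLeft ((tensorMap (J₁ x) (J₂ y) ∘ₗ Λ) ρ)
      = (J₂ y ∘ₗ Λ₂) ρ := fun y ρ => by
    simp only [LinearMap.comp_apply, sum_ptraceLeft_tensorMap hJ₁.2, hm₂]
  have total : ∑ p : ιx × ιy, tensorMap (J₁ p.1) (J₂ p.2) ∘ₗ Λ
      = tensorMap (∑ x, J₁ x) (∑ y, J₂ y) ∘ₗ Λ := by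
    ext1 ρ
    simp only [LinearMap.sum_apply, LinearMap.comp_apply, tensorMap_sum_left, tensorMap_sum_right,
      Fintype.sum_prod_type]
    exact Finset.sum_comm
  have joint : IsInstrument (fun p : ιx × ιy => tensorMap (J₁ p.1) (J₂ p.2) ∘ₗ Λ) :=
    ⟨fun p => ((hJ₁.1 p.1).tensorMap (hJ₂.1 p.2)).comp hΛ.1,
      total ▸ (hJ₁.2.tensorMap hJ₂.2).comp hΛ.2⟩
  exact ⟨joint, marginal₁, marginal₂, _, joint, marginal₁, marginal₂⟩

/-- Given compatible channels `Λ₁, Λ₂` with joint channel `Λ` and arbitrary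
instruments `J₁, J₂`, the instruments `I₁ = {Φ'¹_x ∘ Λ₁}` and `I₂ = {Φ'²_y ∘ Λ₂}` are
parallelly compatible, with joint instrument `{(Φ'¹_x ⊗ Φ'²_y) ∘ Λ}`. -/
theorem stmt_6 {H H₁ H₂ K₁ K₂ ιx ιy : Type*} [Fintype H] [DecidableEq H]
    [Fintype H₁] [DecidableEq H₁] [Fintype H₂] [DecidableEq H₂]
    [Fintype K₁] [DecidableEq K₁] [Fintype K₂] [DecidableEq K₂]
    [Fintype ιx] [Fintype ιy]
    (Λ₁ : Matrix H H ℂ →ₗ[ℂ] Matrix H₁ H₁ ℂ) (hΛ₁ : IsChannel Λ₁)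
    (Λ₂ : Matrix H H ℂ →ₗ[ℂ] Matrix H₂ H₂ ℂ) (hΛ₂ : IsChannel Λ₂)
    (Λ : Matrix H H ℂ →ₗ[ℂ] Matrix (H₁ × H₂) (H₁ × H₂) ℂ) (hΛ : IsChannel Λ)
    (hm₁ : ∀ ρ, ptraceRight (Λ ρ) = Λ₁ ρ) (hm₂ : ∀ ρ, ptraceLeft (Λ ρ) = Λ₂ ρ)
    (J₁ : ιx → (Matrix H₁ H₁ ℂ →ₗ[ℂ] Matrix K₁ K₁ ℂ)) (hJ₁ : IsInstrument J₁)
    (J₂ : ιy → (Matrix H₂ H₂ ℂ →ₗ[ℂ] Matrix K₂ K₂ ℂ)) (hJ₂ : IsInstrument J₂) :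
    IsInstrument (fun p : ιx × ιy => tensorMap (J₁ p.1) (J₂ p.2) ∘ₗ Λ) ∧
    (∀ x ρ, ∑ y, ptraceRight ((tensorMap (J₁ x) (J₂ y) ∘ₗ Λ) ρ) = (J₁ x ∘ₗ Λ₁) ρ) ∧
    (∀ y ρ, ∑ x, ptraceLeft ((tensorMap (J₁ x) (J₂ y) ∘ₗ Λ) ρ) = (J₂ y ∘ₗ Λ₂) ρ) ∧
    ParallelCompatible (fun x => J₁ x ∘ₗ Λ₁) (fun y => J₂ y ∘ₗ Λ₂) :=
  stmt_6_general Λ₁ Λ₂ Λ hΛ hm₁ hm₂ J₁ hJ₁ J₂ hJ₂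

end
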